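/- The monoid M_n = Mon⟨a,b,c,d : aⁿb=0, ac=1, db=1, dc=1, daᵏb=1 for 1 ≤ k ≤ n-1⟩ is congruence-free for every n ≥ 1: its only congruences are the identity relation and the full relation M_n × M_n. -/

import Mathlib

/-!
Every element of `M n` has a unique normal form: either the zero `z`, or a word `β r` in which
`β` is a sequence of blocks `c` and `aᵐb` (`m < n`) and `r` is a word in `a` and `d`. Existence
follows from the relations; uniqueness from the action of the free monoid on normal forms by
left multiplication, which respects the relations.

In normal form, every nonzero `x = β r` satisfies `d^|β| x c^|r| = 1`, and any two distinct
elements are separated by `z`: some `p, q` send exactly one of them to `z`. Peeling letters off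
the right of the tails with `c`, and blocks off the left with `d`, reduces this to a handful of
cases settled by `aⁿb = z` (from the left by powers of `a`, from the right by `aⁿ⁻¹b`). So a
congruence relating two distinct elements relates `z` to `1`, hence every element to `z`.
-/

inductive Letter | a | b | c | d | z
deriving DecidableEq

abbrev W := FreeMonoid Letter
def A : W := FreeMonoid.of .a
def B : W := FreeMonoid.of .b
def C : W := FreeMonoid.of .c
def D : W := FreeMonoid.of .d
def Z : W := FreeMonoid.of .z

/-- The defining relations of `M n`, with the zero realized by the letter `z`. -/
def relM (n : ℕ) : W → W → Prop := fun x y =>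
  (x = A ^ n * B ∧ y = Z) ∨
  (x = A * C ∧ y = 1) ∨ (x = D * B ∧ y = 1) ∨ (x = D * C ∧ y = 1) ∨
  (∃ k, 1 ≤ k ∧ k ≤ n - 1 ∧ x = D * A ^ k * B ∧ y = 1) ∨
  (∃ l : Letter, x = FreeMonoid.of l * Z ∧ y = Z) ∨
  (∃ l : Letter, x = Z * FreeMonoid.of l ∧ y = Z)

def Mcon (n : ℕ) : Con W := conGen (relM n)

/-- The monoid `M n = Mon⟨a,b,c,d : aⁿb=0, ac=1, db=1, dc=1, daᵏb=1 (1 ≤ k ≤ n-1)⟩`. -/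
abbrev M (n : ℕ) := (Mcon n).Quotient

section

variable {S : Type*} [Monoid S]

def SeparatedBy (z x y : S) : Prop := ∃ p q : S, Xor (p * x * q = z) (p * y * q = z)

namespace SeparatedBy

variable {z x y : S}

theorem symm (h : SeparatedBy z x y) : SeparatedBy z y x := by
  obtain ⟨p, q, h⟩ := h
  exact ⟨p, q, xor_comm _ _ ▸ h⟩

theorem of_xor (h : Xor (x = z) (y = z)) : SeparatedBy z x y := ⟨1, 1, by simpa using h⟩

theorem of_mul_left (w : S) (h : SeparatedBy z (w * x) (w * y)) : SeparatedBy z x y := by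
  obtain ⟨p, q, h⟩ := h
  exact ⟨p * w, q, by simpa only [mul_assoc] using h⟩

theorem of_mul_right (w : S) (h : SeparatedBy z (x * w) (y * w)) : SeparatedBy z x y := by
  obtain ⟨p, q, h⟩ := h
  exact ⟨p, w * q, by simpa only [mul_assoc] using h⟩

end SeparatedBy

namespace Con

variable {z : S} (ρ : Con S)

theorem rel_one_of_separatedBy (hzl : ∀ x, z * x = z) (hzr : ∀ x, x * z = z)
    (hunit : ∀ x, x ≠ z → ∃ p q : S, p * x * q = 1) {x y : S} (hxy : ρ x y)
    (hsep : SeparatedBy z x y) : ρ z 1 := by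
  obtain ⟨p, q, hpq⟩ := hsep
  have hpxq : ρ (p * x * q) (p * y * q) := ρ.mul (ρ.mul (ρ.refl p) hxy) (ρ.refl q)
  have key : ∀ u v, ρ u v → u = z → v ≠ z → ρ z 1 := by
    rintro u v huv rfl hv
    obtain ⟨r, s, hrs⟩ := hunit v hv
    simpa [hzl, hzr, hrs] using ρ.mul (ρ.mul (ρ.refl r) huv) (ρ.refl s)
  rcases hpq with ⟨hx, hy⟩ | ⟨hy, hx⟩
  · exact key _ _ hpxq hx hy
  · exact key _ _ (ρ.symm hpxq) hy hx

theorem eq_top_of_rel_one (hzr : ∀ x, x * z = z) (h : ρ z 1) : ρ = ⊤ := by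
  have hz : ∀ x, ρ x z := fun x => by simpa [hzr] using ρ.mul (ρ.refl x) (ρ.symm h)
  exact eq_top_iff.2 fun x y _ => ρ.trans (hz x) (ρ.symm (hz y))

theorem eq_bot_or_eq_top_of_separatedBy (hzl : ∀ x, z * x = z) (hzr : ∀ x, x * z = z)
    (hunit : ∀ x, x ≠ z → ∃ p q : S, p * x * q = 1)
    (hsep : ∀ x y, x ≠ y → SeparatedBy z x y) : ρ = ⊥ ∨ ρ = ⊤ := by
  refine or_iff_not_imp_left.2 fun hρ => ?_
  obtain ⟨x, y, hxy, hne⟩ : ∃ x y, ρ x y ∧ x ≠ y := by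
    by_contra! h
    exact hρ (eq_bot_iff.2 fun x y hxy => h x y hxy)
  exact ρ.eq_top_of_rel_one hzr (ρ.rel_one_of_separatedBy hzl hzr hunit hxy (hsep x y hne))

end Con

end

variable {n : ℕ}

namespace M

theorem eq_of_relM {u v : W} (h : relM n u v) : (u : M n) = v :=
  (Mcon n).eq.2 (ConGen.Rel.of u v h)

theorem A_pow_mul_B : (A : M n) ^ n * B = Z := eq_of_relM (Or.inl ⟨rfl, rfl⟩)

theorem A_mul_C : (A : M n) * C = 1 := eq_of_relM (Or.inr (Or.inl ⟨rfl, rfl⟩))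

theorem D_mul_C : (D : M n) * C = 1 := eq_of_relM (Or.inr (Or.inr (Or.inr (Or.inl ⟨rfl, rfl⟩))))

theorem D_mul_A_pow_mul_B {k : ℕ} (hk : k < n) : (D : M n) * A ^ k * B = 1 := by
  rcases Nat.eq_zero_or_pos k with rfl | hk0
  · simpa using eq_of_relM (n := n) (Or.inr (Or.inr (Or.inl ⟨rfl, rfl⟩)))
  · exact eq_of_relM (Or.inr (Or.inr (Or.inr (Or.inr (Or.inl ⟨k, hk0, by omega, rfl, rfl⟩)))))

theorem mul_Z (x : M n) : x * Z = Z := by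
  induction x using Con.induction_on with | _ w
  induction w using FreeMonoid.inductionOn with
  | one => exact one_mul _
  | of l => exact eq_of_relM (Or.inr (Or.inr (Or.inr (Or.inr (Or.inr (Or.inl ⟨l, rfl, rfl⟩))))))
  | mul u v hu hv => rw [Con.coe_mul, mul_assoc, hv, hu]

theorem Z_mul (x : M n) : (Z : M n) * x = Z := by
  induction x using Con.induction_on with | _ w
  induction w using FreeMonoid.inductionOn with
  | one => exact mul_one _
  | of l => exact eq_of_relM (Or.inr (Or.inr (Or.inr (Or.inr (Or.inr (Or.inr ⟨l, rfl, rfl⟩))))))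
  | mul u v hu hv => rw [Con.coe_mul, ← mul_assoc, hu, hv]

end M

inductive Token (n : ℕ)
  | c
  | b (m : Fin n)

inductive TailLetter
  | a
  | d

/-- `some (β, r)` is the word `β r`, where the token `c` is the letter `c` and `b m` is `aᵐb`;
`none` is the zero `z`. -/
abbrev NormalForm (n : ℕ) := Option (List (Token n) × List TailLetter)

def Token.eval : Token n → M n
  | .c => C
  | .b m => A ^ (m : ℕ) * B

def TailLetter.eval : TailLetter → M n
  | .a => A
  | .d => D

def M.nf (β : List (Token n)) (r : List TailLetter) : M n :=
  (β.map Token.eval).prod * (r.map TailLetter.eval).prod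

def NormalForm.eval : NormalForm n → M n
  | none => Z
  | some (β, r) => M.nf β r

section Action

variable [NeZero n]

def Letter.act : Letter → NormalForm n → NormalForm n
  | _, none => none
  | .z, some _ => none
  | .b, some (β, r) => some (.b 0 :: β, r)
  | .c, some (β, r) => some (.c :: β, r)
  | .a, some ([], r) => some ([], .a :: r)
  | .a, some (.c :: β, r) => some (β, r)
  | .a, some (.b m :: β, r) => if h : m.val + 1 < n then some (.b ⟨m + 1, h⟩ :: β, r) else none
  | .d, some ([], r) => some ([], .d :: r)
  | .d, some (_ :: β, r) => some (β, r)

instance : MulAction W (NormalForm n) :=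
  MulAction.compHom _ (FreeMonoid.lift Letter.act : W →* Function.End (NormalForm n))

namespace NormalForm

section

variable (β : List (Token n)) (r : List TailLetter)

theorem A_smul_nil : A • (some ([], r) : NormalForm n) = some ([], .a :: r) := rfl

theorem A_smul_c : A • (some (.c :: β, r) : NormalForm n) = some (β, r) := rfl

theorem A_smul_b (m : Fin n) : A • (some (.b m :: β, r) : NormalForm n) =
    if h : m.val + 1 < n then some (.b ⟨m + 1, h⟩ :: β, r) else none := rfl

theorem B_smul : B • (some (β, r) : NormalForm n) = some (.b 0 :: β, r) := rfl

theorem C_smul : C • (some (β, r) : NormalForm n) = some (.c :: β, r) := rfl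

theorem D_smul_nil : D • (some ([], r) : NormalForm n) = some ([], .d :: r) := rfl

theorem D_smul_cons (t : Token n) : D • (some (t :: β, r) : NormalForm n) = some (β, r) := by
  cases t <;> rfl

end

theorem Z_smul (s : NormalForm n) : Z • s = none := by
  rcases s with _ | _ <;> rfl

theorem smul_none (w : W) : w • (none : NormalForm n) = none := by
  induction w using FreeMonoid.inductionOn with
  | one => rfl
  | of l => cases l <;> rfl
  | mul u v hu hv => rw [mul_smul, hv, hu]

theorem A_pow_smul (k : ℕ) (m : Fin n) (β : List (Token n)) (r : List TailLetter) :
    A ^ k • (some (.b m :: β, r) : NormalForm n) =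
      if h : m + k < n then some (.b ⟨m + k, h⟩ :: β, r) else none := by
  induction k with
  | zero => simp
  | succ k ih =>
    rw [pow_succ', mul_smul, ih]
    by_cases h : m + (k + 1) < n
    · rw [dif_pos (by omega), dif_pos h]
      exact dif_pos h
    · rw [dif_neg h]
      split_ifs
      · exact dif_neg h
      · rfl

theorem smul_eq_of_relM {u v : W} (h : relM n u v) (s : NormalForm n) : u • s = v • s := by
  rcases s with _ | ⟨β, r⟩
  · rw [smul_none, smul_none]
  rcases h with ⟨rfl, rfl⟩ | ⟨rfl, rfl⟩ | ⟨rfl, rfl⟩ | ⟨rfl, rfl⟩ | ⟨k, hk₁, hk₂, rfl, rfl⟩ |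
    ⟨l, rfl, rfl⟩ | ⟨l, rfl, rfl⟩
  · rw [mul_smul, B_smul, A_pow_smul, dif_neg (by simp), Z_smul]
  · rfl
  · rfl
  · rfl
  · rw [mul_smul, mul_smul, B_smul, A_pow_smul, dif_pos (by rw [Fin.val_zero]; omega)]
    rfl
  · rw [mul_smul, Z_smul, smul_none]
  · rw [mul_smul, Z_smul, Z_smul]

end NormalForm

theorem Mcon_le_ker_toEndHom :
    Mcon n ≤ Con.ker (MulAction.toEndHom (M := W) (α := NormalForm n)) :=
  Con.conGen_le.2 fun _ _ h => (Con.ker_rel _).2 (funext (NormalForm.smul_eq_of_relM h))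

instance : MulAction (M n) (NormalForm n) :=
  MulAction.compHom _ ((Mcon n).lift MulAction.toEndHom Mcon_le_ker_toEndHom)

theorem M.coe_smul (w : W) (s : NormalForm n) : (w : M n) • s = w • s := rfl

end Action

namespace NormalForm

variable [NeZero n]

theorem eval_of_smul (l : Letter) (s : NormalForm n) :
    (FreeMonoid.of l • s).eval = (FreeMonoid.of l : M n) * s.eval := by
  rcases s with _ | ⟨β, r⟩
  · rw [smul_none]
    exact (M.mul_Z _).symm
  cases l with
  | z => exact (M.Z_mul _).symm
  | b =>
    change (B • _ : NormalForm n).eval = (B : M n) * _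
    simp [B_smul, eval, M.nf, Token.eval, mul_assoc]
  | c =>
    change (C • _ : NormalForm n).eval = (C : M n) * _
    simp [C_smul, eval, M.nf, Token.eval, mul_assoc]
  | a =>
    change (A • _ : NormalForm n).eval = (A : M n) * _
    rcases β with _ | ⟨_ | m, β⟩
    · simp [A_smul_nil, eval, M.nf, TailLetter.eval]
    · simp [A_smul_c, eval, M.nf, Token.eval, ← mul_assoc, M.A_mul_C]
    · rw [A_smul_b]
      split_ifs with h
      · simp [eval, M.nf, Token.eval, ← mul_assoc, pow_succ']
      · have hm : (m : ℕ) + 1 = n := by omega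
        simp [eval, M.nf, Token.eval, ← mul_assoc, ← pow_succ', hm, M.A_pow_mul_B, M.Z_mul]
  | d =>
    change (D • _ : NormalForm n).eval = (D : M n) * _
    rcases β with _ | ⟨_ | m, β⟩
    · simp [D_smul_nil, eval, M.nf, TailLetter.eval]
    · simp [D_smul_cons, eval, M.nf, Token.eval, ← mul_assoc, M.D_mul_C]
    · simp [D_smul_cons, eval, M.nf, Token.eval, ← mul_assoc, M.D_mul_A_pow_mul_B m.2]

end NormalForm

namespace M

variable [NeZero n]

def normalForm (x : M n) : NormalForm n := x • some ([], [])

theorem mul_eval (x : M n) (s : NormalForm n) : x * s.eval = (x • s).eval := by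
  induction x using Con.induction_on with | _ w
  induction w using FreeMonoid.inductionOn generalizing s with
  | one => rw [Con.coe_one, one_mul, one_smul]
  | of l => rw [coe_smul, NormalForm.eval_of_smul]
  | mul u v hu hv => rw [Con.coe_mul, mul_assoc, hv, hu, mul_smul]

theorem eval_normalForm (x : M n) : x.normalForm.eval = x :=
  calc x.normalForm.eval = x * NormalForm.eval (some ([], [])) := (mul_eval _ _).symm
    _ = x := by simp [NormalForm.eval, nf]

theorem A_pow_smul (k : ℕ) (m : Fin n) (β : List (Token n)) (r : List TailLetter) :
    (A : M n) ^ k • (some (.b m :: β, r) : NormalForm n) =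
      if h : m + k < n then some (.b ⟨m + k, h⟩ :: β, r) else none :=
  NormalForm.A_pow_smul k m β r

theorem tailLetters_smul (r r' : List TailLetter) :
    ((r.map TailLetter.eval).prod : M n) • (some ([], r') : NormalForm n) =
      some ([], r ++ r') := by
  induction r with
  | nil => exact one_smul _ _
  | cons x r ih =>
    rw [List.map_cons, List.prod_cons, mul_smul, ih]
    cases x
    · exact NormalForm.A_smul_nil _
    · exact NormalForm.D_smul_nil _

theorem tokens_smul (β β' : List (Token n)) (r : List TailLetter) :
    (β.map Token.eval).prod • (some (β', r) : NormalForm n) = some (β ++ β', r) := by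
  induction β with
  | nil => exact one_smul _ _
  | cons t β ih =>
    rw [List.map_cons, List.prod_cons, mul_smul, ih]
    cases t with
    | c => exact NormalForm.C_smul _ _
    | b m =>
      rw [Token.eval, mul_smul, coe_smul, NormalForm.B_smul, A_pow_smul, dif_pos (by simp)]
      simp

theorem normalForm_eval (s : NormalForm n) : s.eval.normalForm = s := by
  rcases s with _ | ⟨β, r⟩
  · exact NormalForm.Z_smul _
  · simp [normalForm, NormalForm.eval, nf, mul_smul, tailLetters_smul, tokens_smul]

end M

theorem NormalForm.eval_injective [NeZero n] : Function.Injective (NormalForm.eval (n := n)) :=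
  Function.LeftInverse.injective M.normalForm_eval

def Token.top [NeZero n] : Token n := .b ⟨n - 1, Nat.sub_one_lt (NeZero.ne n)⟩

namespace M

theorem nf_append_mul_C (β : List (Token n)) (r : List TailLetter) (x : TailLetter) :
    nf β (r ++ [x]) * C = nf β r := by
  cases x <;> simp [nf, mul_assoc, TailLetter.eval, A_mul_C, D_mul_C]

theorem nf_mul_C_pow (β : List (Token n)) (r : List TailLetter) :
    nf β r * C ^ r.length = nf β [] := by
  induction r using List.reverseRecOn with
  | nil => exact mul_one _
  | append_singleton r x ih =>
    rw [List.length_append, List.length_singleton, pow_succ', ← mul_assoc, nf_append_mul_C, ih]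

theorem nf_nil_mul_eval (β : List (Token n)) (t : Token n) :
    nf β [] * t.eval = nf (β ++ [t]) [] := by
  simp [nf]

variable [NeZero n]

theorem nf_ne_Z (β : List (Token n)) (r : List TailLetter) : nf β r ≠ Z :=
  NormalForm.eval_injective.ne (Option.some_ne_none (β, r))

theorem mul_nf (x : M n) (β : List (Token n)) (r : List TailLetter) :
    x * nf β r = NormalForm.eval (x • (some (β, r) : NormalForm n)) :=
  mul_eval x (some (β, r))

theorem D_mul_nf_cons (t : Token n) (β : List (Token n)) (r : List TailLetter) :
    (D : M n) * nf (t :: β) r = nf β r := by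
  rw [mul_nf, coe_smul, NormalForm.D_smul_cons]
  rfl

theorem D_pow_mul_nf_append (β γ : List (Token n)) (r : List TailLetter) :
    (D : M n) ^ β.length * nf (β ++ γ) r = nf γ r := by
  induction β with
  | nil => exact one_mul _
  | cons t β ih =>
    rw [List.length_cons, pow_succ, mul_assoc, List.cons_append, D_mul_nf_cons, ih]

theorem A_mul_nf_c (β : List (Token n)) (r : List TailLetter) :
    (A : M n) * nf (.c :: β) r = nf β r := by
  rw [mul_nf, coe_smul, NormalForm.A_smul_c]
  rfl

theorem A_pow_mul_nf_b (k : ℕ) (m : Fin n) (β : List (Token n)) (r : List TailLetter) :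
    (A : M n) ^ k * nf (.b m :: β) r =
      if h : m + k < n then nf (.b ⟨m + k, h⟩ :: β) r else Z := by
  rw [mul_nf, A_pow_smul]
  split_ifs <;> rfl

theorem A_mul_nf_b (m : Fin n) (β : List (Token n)) (r : List TailLetter) :
    (A : M n) * nf (.b m :: β) r = if h : m + 1 < n then nf (.b ⟨m + 1, h⟩ :: β) r else Z := by
  rw [← A_pow_mul_nf_b, pow_one]

theorem nf_append_a_mul_top (β : List (Token n)) (r : List TailLetter) :
    nf β (r ++ [.a]) * (Token.top : Token n).eval = Z := by
  have h : (A : M n) * (A ^ (n - 1) * B) = Z := by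
    rw [← mul_assoc, ← pow_succ', Nat.sub_add_cancel NeZero.one_le, A_pow_mul_B]
  simp [nf, Token.top, Token.eval, TailLetter.eval, mul_assoc, h, mul_Z]

theorem nf_append_d_mul_top (β : List (Token n)) (r : List TailLetter) :
    nf β (r ++ [.d]) * (Token.top : Token n).eval = nf β r := by
  have h : (D : M n) * (A ^ (n - 1) * B) = 1 := by
    rw [← mul_assoc, D_mul_A_pow_mul_B (Nat.sub_one_lt (NeZero.ne n))]
  simp [nf, Token.top, Token.eval, TailLetter.eval, mul_assoc, h]

theorem exists_mul_mul_eq_one (x : M n) (hx : x ≠ Z) : ∃ p q : M n, p * x * q = 1 := by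
  rw [← eval_normalForm x] at hx ⊢
  generalize x.normalForm = s at hx ⊢
  rcases s with _ | ⟨β, r⟩
  · exact absurd rfl hx
  · refine ⟨D ^ β.length, C ^ r.length, ?_⟩
    change _ * nf β r * _ = _
    rw [mul_assoc, nf_mul_C_pow]
    simpa [nf] using D_pow_mul_nf_append β [] []

theorem separatedBy_nf_append_a (β : List (Token n)) (r : List TailLetter)
    (β' : List (Token n)) (r' : List TailLetter) (hr' : r'.getLast? ≠ some .a) :
    SeparatedBy (Z : M n) (nf β (r ++ [.a])) (nf β' r') := by
  refine .of_mul_right Token.top.eval (.of_xor (Or.inl ⟨nf_append_a_mul_top β r, ?_⟩))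
  rcases r'.eq_nil_or_concat with rfl | ⟨r', y, rfl⟩
  · rw [nf_nil_mul_eval]
    exact nf_ne_Z _ _
  · cases y
    · simp at hr'
    · rw [List.concat_eq_append, nf_append_d_mul_top]
      exact nf_ne_Z _ _

theorem separatedBy_one_nf_cons (t : Token n) (γ : List (Token n)) :
    SeparatedBy (Z : M n) (nf [] []) (nf (t :: γ) []) := by
  refine .of_mul_left A ?_
  have hA : (A : M n) * nf [] [] = nf [] ([] ++ [.a]) := by simp [nf, TailLetter.eval]
  rw [hA]
  cases t with
  | c =>
    rw [A_mul_nf_c]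
    exact separatedBy_nf_append_a _ _ _ _ (by simp)
  | b m =>
    rw [A_mul_nf_b]
    split_ifs
    · exact separatedBy_nf_append_a _ _ _ _ (by simp)
    · exact .of_xor (Or.inr ⟨rfl, nf_ne_Z _ _⟩)

theorem separatedBy_nf_b_b (γ : List (Token n)) (r : List TailLetter) {m₁ m₂ : Fin n}
    (h : m₂ < m₁) : SeparatedBy (Z : M n) (nf (.b m₁ :: γ) r) (nf (.b m₂ :: γ) r) := by
  refine .of_mul_left ((A : M n) ^ (n - m₁)) (.of_xor (Or.inl ⟨?_, ?_⟩))
  · rw [A_pow_mul_nf_b, dif_neg (by omega)]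
  · rw [A_pow_mul_nf_b, dif_pos (by omega)]
    exact nf_ne_Z _ _

theorem separatedBy_nf_nil_nil (β₁ β₂ : List (Token n)) (h : β₁ ≠ β₂) :
    SeparatedBy (Z : M n) (nf β₁ []) (nf β₂ []) := by
  induction hN : β₁.length + β₂.length using Nat.strong_induction_on generalizing β₁ β₂ with
  | _ N ih =>
  rcases β₁ with _ | ⟨t₁, γ₁⟩ <;> rcases β₂ with _ | ⟨t₂, γ₂⟩
  · exact absurd rfl h
  · exact separatedBy_one_nf_cons t₂ γ₂
  · exact (separatedBy_one_nf_cons t₁ γ₁).symm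
  simp only [List.length_cons] at hN
  by_cases hγ : γ₁ = γ₂
  · subst hγ
    have hcb : ∀ m, SeparatedBy (Z : M n) (nf (.c :: γ₁) []) (nf (.b m :: γ₁) []) := by
      intro m
      refine .of_mul_left A ?_
      rw [A_mul_nf_c, A_mul_nf_b]
      split_ifs
      · exact ih _ (by simp only [List.length_cons]; omega) _ _ List.ne_cons_self rfl
      · exact .of_xor (Or.inr ⟨rfl, nf_ne_Z _ _⟩)
    cases t₁ with
    | c =>
      cases t₂ with
      | c => exact absurd rfl h
      | b m => exact hcb m
    | b m₁ =>
      cases t₂ with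
      | c => exact (hcb m₁).symm
      | b m₂ =>
        rcases lt_trichotomy m₁ m₂ with hlt | rfl | hgt
        · exact (separatedBy_nf_b_b _ _ hlt).symm
        · exact absurd rfl h
        · exact separatedBy_nf_b_b _ _ hgt
  · refine .of_mul_left D ?_
    rw [D_mul_nf_cons, D_mul_nf_cons]
    exact ih _ (by omega) _ _ hγ rfl

theorem separatedBy_nf_nil_right (r₁ : List TailLetter) :
    ∀ β₁ β₂ : List (Token n), (β₁, r₁) ≠ (β₂, []) →
      SeparatedBy (Z : M n) (nf β₁ r₁) (nf β₂ []) := by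
  induction r₁ using List.reverseRecOn with
  | nil => exact fun β₁ β₂ h => separatedBy_nf_nil_nil β₁ β₂ (by simpa using h)
  | append_singleton r x ih =>
    intro β₁ β₂ h
    cases x with
    | a => exact separatedBy_nf_append_a _ _ _ _ (by simp)
    | d =>
      by_cases hc : r = [] ∧ β₁ = β₂ ++ [Token.top]
      · -- right multiplication by `aⁿ⁻¹b` would identify the two sides; strip `β₂` instead
        obtain ⟨rfl, rfl⟩ := hc
        refine .of_mul_left (D ^ β₂.length) ?_
        have hβ₂ := D_pow_mul_nf_append β₂ [] []
        rw [List.append_nil] at hβ₂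
        rw [D_pow_mul_nf_append, hβ₂]
        refine .of_mul_left A (.of_xor (Or.inl ⟨?_, ?_⟩))
        · rw [Token.top, A_mul_nf_b, dif_neg (by simp [Nat.sub_add_cancel NeZero.one_le])]
        · simpa [nf, TailLetter.eval] using nf_ne_Z (n := n) [] [.a]
      · refine .of_mul_right Token.top.eval ?_
        rw [nf_append_d_mul_top, nf_nil_mul_eval]
        refine ih _ _ fun e => hc ?_
        simp only [Prod.mk.injEq] at e
        exact ⟨e.2, e.1⟩

theorem separatedBy_nf (r₁ : List TailLetter) :
    ∀ (β₁ β₂ : List (Token n)) (r₂ : List TailLetter), (β₁, r₁) ≠ (β₂, r₂) →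
      SeparatedBy (Z : M n) (nf β₁ r₁) (nf β₂ r₂) := by
  induction r₁ using List.reverseRecOn with
  | nil => exact fun β₁ β₂ r₂ h => (separatedBy_nf_nil_right r₂ β₂ β₁ (Ne.symm h)).symm
  | append_singleton r x ih =>
    intro β₁ β₂ r₂ h
    rcases r₂.eq_nil_or_concat with rfl | ⟨r', y, rfl⟩
    · exact separatedBy_nf_nil_right _ _ _ h
    rw [List.concat_eq_append] at h ⊢
    by_cases hxy : x = y
    · subst hxy
      refine .of_mul_right C ?_
      rw [nf_append_mul_C, nf_append_mul_C]
      exact ih _ _ _ fun e => h (by simp_all)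
    · cases x <;> cases y
      · exact absurd rfl hxy
      · exact separatedBy_nf_append_a _ _ _ _ (by simp)
      · exact (separatedBy_nf_append_a _ _ _ _ (by simp)).symm
      · exact absurd rfl hxy

theorem separatedBy_of_ne (x y : M n) (h : x ≠ y) : SeparatedBy (Z : M n) x y := by
  have hne : x.normalForm ≠ y.normalForm := fun e =>
    h (by rw [← eval_normalForm x, e, eval_normalForm])
  rw [← eval_normalForm x, ← eval_normalForm y]
  generalize x.normalForm = s, y.normalForm = t at hne
  rcases s with _ | ⟨β₁, r₁⟩ <;> rcases t with _ | ⟨β₂, r₂⟩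
  · exact absurd rfl hne
  · exact .of_xor (Or.inl ⟨rfl, nf_ne_Z _ _⟩)
  · exact .of_xor (Or.inr ⟨rfl, nf_ne_Z _ _⟩)
  · exact separatedBy_nf _ _ _ _ fun e => hne (congrArg some e)

end M

/-- `M n` is congruence-free: its only congruences are the identity relation
and the full relation. -/
theorem stmt10 (n : ℕ) (hn : 1 ≤ n) (ρ : Con (M n)) : ρ = ⊥ ∨ ρ = ⊤ := by
  have : NeZero n := ⟨by omega⟩
  exact ρ.eq_bot_or_eq_top_of_separatedBy M.Z_mul M.mul_Z M.exists_mul_mul_eq_one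
    M.separatedBy_of_ne
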